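/- arXiv:2011.06572 — 11 statements merged into one kernel-verified Lean document; each statement's English description precedes it below -/
import Mathlib

section
/- Let r be a differentiable convex function, g a vector, z a point, and suppose w minimizes y ↦ ⟨g, y⟩ + V_z(y) over a convex set 𝒵 (where V is the Bregman divergence of r). Then for all u ∈ 𝒵, ⟨g, w - u⟩ ≤ V_z(u) - V_w(u) - V_z(w). -/
open scoped RealInnerProductSpace

/-- Bregman proximal optimality: if `w` minimizes `y ↦ ⟨g, y⟩ + V_z(y)` over the convex set `Z`
(characterized by first-order optimality), then `⟨g, w - u⟩ ≤ V_z(u) - V_w(u) - V_z(w)` for all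
`u ∈ Z`. -/
theorem prox_optimality {E : Type*} [NormedAddCommGroup E] [InnerProductSpace ℝ E]
    [CompleteSpace E]
    (r : E → ℝ) (r' : E → E)
    (hdiff : ∀ x, HasGradientAt r (r' x) x)
    (hconv : ConvexOn ℝ Set.univ r)
    (V : E → E → ℝ)
    (hV : ∀ x y, V x y = r y - r x - ⟪r' x, y - x⟫)
    (Z : Set E) (hZ : Convex ℝ Z)
    (g z w : E) (hwZ : w ∈ Z)
    (hopt : ∀ u ∈ Z, 0 ≤ ⟪g + (r' w - r' z), u - w⟫) :
    ∀ u ∈ Z, ⟪g, w - u⟫ ≤ V z u - V w u - V z w := by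
  intro u huZ
  have h := hopt u huZ
  have hid : V z u - V w u - V z w = ⟪r' w - r' z, u - w⟫ := by
    rw [hV, hV, hV]
    have h1 : (u - z) = (u - w) + (w - z) := by abel
    rw [h1, inner_add_right, inner_sub_left]
    ring
  rw [hid]
  rw [inner_add_left] at h
  have : ⟪g, w - u⟫ = -⟪g, u - w⟫ := by rw [← inner_neg_right]; congr 1; abel
  linarith
end

section
/- If f is convex and differentiable, and f is L-relatively smooth with respect to r (i.e., the Bregman divergence satisfies V^f_x(y) ≤ L·V^r_x(y) for all x, y), then the gradient operator g = ∇f is L-relatively Lipschitz with respect to r: for all z, w, u, ⟨∇f(w) - ∇f(z), w - u⟩ ≤ L(V^r_z(w) + V^r_w(u)). -/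
open scoped RealInnerProductSpace

lemma grad_convex_subgrad {E : Type*} [NormedAddCommGroup E]
    [InnerProductSpace ℝ E] [CompleteSpace E]
    (f : E → ℝ) (f' : E → E)
    (hfdiff : ∀ x, HasGradientAt f (f' x) x)
    (hconv : ConvexOn ℝ Set.univ f) (z u : E) :
    ⟪f' z, u - z⟫ ≤ f u - f z := by
  set g : ℝ →ᵃ[ℝ] E := AffineMap.lineMap z u with hg
  have hgt : ∀ t : ℝ, g t = z + t • (u - z) := by
    intro t; simp [hg, AffineMap.lineMap_apply, add_comm]
  have hφconv : ConvexOn ℝ Set.univ (f ∘ g) := by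
    have := hconv.comp_affineMap g
    simpa using this
  have hderiv : HasDerivAt (f ∘ g) ⟪f' z, u - z⟫ 0 := by
    have h1 : HasDerivAt (fun t : ℝ => g t) (u - z) 0 := by
      simp only [hgt]
      have : HasDerivAt (fun t : ℝ => t • (u - z)) ((1:ℝ) • (u - z)) 0 :=
        (hasDerivAt_id 0).smul_const (u - z)
      simpa using this.const_add z
    have h2 : HasFDerivAt f ((InnerProductSpace.toDual ℝ E) (f' (g 0))) (g 0) :=
      (hfdiff (g 0)).hasFDerivAt
    have := h2.comp_hasDerivAt 0 h1
    simpa [hgt, real_inner_comm] using this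
  have hslope : ⟪f' z, u - z⟫ ≤ slope (f ∘ g) 0 1 := by
    refine hφconv.le_slope_of_hasDerivWithinAt (Set.mem_univ 0) (Set.mem_univ 1)
      one_pos (hderiv.hasDerivWithinAt)
  have : slope (f ∘ g) 0 1 = f u - f z := by
    simp [slope_def_field, hgt]
  linarith [hslope, this.le, this.ge]

/-- If convex differentiable `f` is `L`-relatively smooth with respect to `r`
(`V^f_x(y) ≤ L·V^r_x(y)`), then `∇f` is `L`-relatively Lipschitz with respect to `r`:
`⟪∇f(w) - ∇f(z), w - u⟫ ≤ L(V^r_z(w) + V^r_w(u))` for all `z, w, u`. -/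
theorem rel_smooth_implies_rel_lipschitz {E : Type*} [NormedAddCommGroup E]
    [InnerProductSpace ℝ E] [CompleteSpace E]
    (f r : E → ℝ) (f' r' : E → E)
    (hfdiff : ∀ x, HasGradientAt f (f' x) x)
    (hrdiff : ∀ x, HasGradientAt r (r' x) x)
    (hconv : ConvexOn ℝ Set.univ f)
    (Vf Vr : E → E → ℝ)
    (hVf : ∀ x y, Vf x y = f y - f x - ⟪f' x, y - x⟫)
    (hVr : ∀ x y, Vr x y = r y - r x - ⟪r' x, y - x⟫)
    (L : ℝ)
    (hrel : ∀ x y, Vf x y ≤ L * Vr x y) :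
    ∀ z w u, ⟪f' w - f' z, w - u⟫ ≤ L * (Vr z w + Vr w u) := by
  intro z w u
  have haux : ⟪f' z, u - z⟫ ≤ f u - f z :=
    grad_convex_subgrad f f' hfdiff hconv z u
  have h1 := hrel z w
  have h2 := hrel w u
  rw [hVf] at h1 h2
  have key : ⟪f' w - f' z, w - u⟫ =
      (f u - f w - ⟪f' w, u - w⟫) + (f w - f z - ⟪f' z, w - z⟫)
      - (f u - f z - ⟪f' z, u - z⟫) := by
    simp only [inner_sub_left, inner_sub_right]
    ring
  linarith
end

section
/- Mirror prox regret bound: let g be λ-relatively Lipschitz with respect to differentiable convex r (⟨g(w)-g(z), w-u⟩ ≤ λ(V_z(w) + V_w(u)) for all z,w,u). Given initial z₀, define for 0 ≤ t < T: w_t = Prox_{z_t}((1/λ)g(z_t)) and z_{t+1} = Prox_{z_t}((1/λ)g(w_t)), where Prox_x(v) := argmin_y ⟨v,y⟩ + V_x(y). Then for all u, Σ_{t=0}^{T-1} ⟨g(w_t), w_t - u⟩ ≤ λ·V_{z₀}(u). -/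
open scoped RealInnerProductSpace

lemma grad_lower_bound {E : Type*} [NormedAddCommGroup E]
    [InnerProductSpace ℝ E] [CompleteSpace E]
    (r : E → ℝ) (r' : E → E)
    (hdiff : ∀ x, HasGradientAt r (r' x) x)
    (hconv : ConvexOn ℝ Set.univ r) (x y : E) :
    ⟪r' x, y - x⟫ ≤ r y - r x := by
  set c : ℝ →ᵃ[ℝ] E := AffineMap.lineMap x y with hc
  have hφ : ConvexOn ℝ (c ⁻¹' Set.univ) (r ∘ c) := hconv.comp_affineMap c
  have hcd : HasDerivAt (fun t : ℝ => c t) (y - x) 0 := by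
    simp only [hc, AffineMap.coe_lineMap]
    simpa using ((hasDerivAt_id (0:ℝ)).smul_const (y - x)).add_const x
  have hc0 : c 0 = x := by simp [hc]
  have hd : HasDerivAt (r ∘ c) ⟪r' x, y - x⟫ 0 := by
    have := (hc0 ▸ (hdiff x).hasFDerivAt).comp_hasDerivAt 0 hcd
    simpa [InnerProductSpace.toDual_apply_apply, hc0] using this
  have hslope := hφ.le_slope_of_hasDerivAt (by simp) (by simp)
      (zero_lt_one) hd
  have hc1 : c 1 = y := by simp [hc]
  simpa [slope, hc0, hc1] using hslope

/-- Mirror prox regret bound (Proposition 1): if `g` is `λ`-relatively Lipschitz with respect to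
`r`, and the iterates `w t = Prox_{z t}((1/λ) g(z t))`, `z (t+1) = Prox_{z t}((1/λ) g(w t))`
satisfy the first-order proximal optimality inequalities, then for all `u`,
`∑_{t<T} ⟨g(w t), w t - u⟩ ≤ λ V_{z 0}(u)`. -/
theorem mirror_prox_regret {E : Type*} [NormedAddCommGroup E]
    [InnerProductSpace ℝ E] [CompleteSpace E]
    (r : E → ℝ) (r' : E → E)
    (hdiff : ∀ x, HasGradientAt r (r' x) x)
    (hconv : ConvexOn ℝ Set.univ r)
    (V : E → E → ℝ)
    (hV : ∀ x y, V x y = r y - r x - ⟪r' x, y - x⟫)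
    (g : E → E) (lam : ℝ) (hlam : 0 < lam)
    (hrel : ∀ z w u, ⟪g w - g z, w - u⟫ ≤ lam * (V z w + V w u))
    (z w : ℕ → E)
    (hw : ∀ t u, ⟪(1 / lam) • g (z t), w t - u⟫ ≤ V (z t) u - V (w t) u - V (z t) (w t))
    (hz : ∀ t u, ⟪(1 / lam) • g (w t), z (t + 1) - u⟫ ≤
      V (z t) u - V (z (t + 1)) u - V (z t) (z (t + 1)))
    (T : ℕ) (u : E) :
    ∑ t ∈ Finset.range T, ⟪g (w t), w t - u⟫ ≤ lam * V (z 0) u := by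
  have hVnn : ∀ x y, 0 ≤ V x y := fun x y => by
    rw [hV]
    linarith [grad_lower_bound r r' hdiff hconv x y]
  have key : ∀ t, ⟪g (w t), w t - u⟫ ≤ lam * V (z t) u - lam * V (z (t + 1)) u := by
    intro t
    have hA := hw t (z (t + 1))
    have hB := hz t u
    have hC := hrel (z t) (w t) (z (t + 1))
    rw [real_inner_smul_left] at hA hB
    have hA' : ⟪g (z t), w t - z (t + 1)⟫ ≤
        lam * (V (z t) (z (t + 1)) - V (w t) (z (t + 1)) - V (z t) (w t)) := by
      have := mul_le_mul_of_nonneg_left hA hlam.le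
      rw [← mul_assoc, mul_one_div, div_self hlam.ne', one_mul] at this
      linarith
    have hB' : ⟪g (w t), z (t + 1) - u⟫ ≤
        lam * (V (z t) u - V (z (t + 1)) u - V (z t) (z (t + 1))) := by
      have := mul_le_mul_of_nonneg_left hB hlam.le
      rw [← mul_assoc, mul_one_div, div_self hlam.ne', one_mul] at this
      linarith
    have hsplit : ⟪g (w t), w t - u⟫ = ⟪g (z t), w t - z (t + 1)⟫ +
        ⟪g (w t) - g (z t), w t - z (t + 1)⟫ + ⟪g (w t), z (t + 1) - u⟫ := by
      simp only [inner_sub_left, inner_sub_right]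
      ring
    rw [hsplit]
    nlinarith [hA', hB', hC]
  calc ∑ t ∈ Finset.range T, ⟪g (w t), w t - u⟫
      ≤ ∑ t ∈ Finset.range T, (lam * V (z t) u - lam * V (z (t + 1)) u) :=
        Finset.sum_le_sum fun t _ => key t
    _ = lam * V (z 0) u - lam * V (z T) u := Finset.sum_range_sub' _ _
    _ ≤ lam * V (z 0) u := by
        have := mul_nonneg hlam.le (hVnn (z T) u)
        linarith
end

section
/- If f : ℝᵈ → ℝ is convex, differentiable, and L_i-smooth in coordinate i (|∇_i f(x + c·e_i) - ∇_i f(x)| ≤ L_i|c| for all x and c ∈ ℝ), then for all x, y: f(y) ≥ f(x) + ⟨∇f(x), y - x⟩ + (1/(2L_i))|∇_i f(y) - ∇_i f(x)|². -/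
/-!
Convexity at `x`, applied to the point `y - c eᵢ`, gives
`f x + ⟪∇f x, y - x⟫ - c ∇ᵢf x ≤ f (y - c eᵢ)`, and the descent lemma along the coordinate
line through `y`, whose derivative is `Lᵢ`-Lipschitz, gives
`f (y - c eᵢ) ≤ f y - c ∇ᵢf y + Lᵢ c² / 2`. Hence `f y` exceeds the first-order model at `x` by at
least `c (∇ᵢf y - ∇ᵢf x) - Lᵢ c² / 2`, which is maximised at `c = (∇ᵢf y - ∇ᵢf x) / Lᵢ`.
-/

open scoped RealInnerProductSpace

section
variable {E : Type*} [NormedAddCommGroup E] [NormedSpace ℝ E]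

theorem HasFDerivAt.hasDerivAt_comp_add_smul {F : Type*} [NormedAddCommGroup F] [NormedSpace ℝ F]
    {f : E → F} {f' : E →L[ℝ] F} {z v : E} {t : ℝ} (hf : HasFDerivAt f f' (z + t • v)) :
    HasDerivAt (fun s : ℝ => f (z + s • v)) (f' v) t :=
  hf.comp_hasDerivAt t (((hasDerivAt_id t).smul_const v).const_add z |>.congr_deriv (one_smul ℝ v))

theorem ConvexOn.add_fderiv_sub_le {s : Set E} {f : E → ℝ} {f' : E →L[ℝ] ℝ} {x y : E}
    (hf : ConvexOn ℝ s f) (hx : x ∈ s) (hy : y ∈ s) (hf' : HasFDerivAt f f' x) :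
    f x + f' (y - x) ≤ f y := by
  set ℓ : ℝ →ᵃ[ℝ] E := AffineMap.lineMap x y
  have hline : ConvexOn ℝ (ℓ ⁻¹' s) (f ∘ ℓ) := hf.comp_affineMap ℓ
  have hderiv : HasDerivAt (f ∘ ℓ) (f' (y - x)) 0 := by
    have hf'0 : HasFDerivAt f f' (ℓ 0) := by simpa [ℓ] using hf'
    exact hf'0.comp_hasDerivAt 0 AffineMap.hasDerivAt_lineMap
  have hslope := hline.le_slope_of_hasDerivAt (by simpa [ℓ] using hx) (by simpa [ℓ] using hy)
    one_pos hderiv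
  simp only [slope_def_field, Function.comp_apply, ℓ, AffineMap.lineMap_apply_one,
    AffineMap.lineMap_apply_zero, sub_zero, div_one] at hslope
  linarith
end

theorem le_add_mul_add_sq_of_deriv_sub_le {g g' : ℝ → ℝ} {L c : ℝ}
    (hg : ∀ t, HasDerivAt g (g' t) t) (hg' : ∀ t, 0 ≤ t → g' t - g' 0 ≤ L * t) (hc : 0 ≤ c) :
    g c ≤ g 0 + c * g' 0 + L * c ^ 2 / 2 := by
  have hB : ∀ t, HasDerivAt (fun t => g 0 + t * g' 0 + L * t ^ 2 / 2) (g' 0 + L * t) t := by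
    intro t
    exact ((((hasDerivAt_id t).mul_const (g' 0)).const_add (g 0)).add
      (((hasDerivAt_pow 2 t).const_mul L).div_const 2)).congr_deriv (by
        simp only [one_mul, Nat.cast_ofNat, Nat.add_one_sub_one, pow_one]
        ring)
  refine image_le_of_deriv_right_le_deriv_boundary
    (fun t _ => (hg t).continuousAt.continuousWithinAt) (fun t _ => (hg t).hasDerivWithinAt)
    (by simp) (fun t _ => (hB t).continuousAt.continuousWithinAt)
    (fun t _ => (hB t).hasDerivWithinAt) (fun t ht => ?_) ⟨hc, le_rfl⟩
  linarith [hg' t ht.1]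

theorem le_add_mul_add_sq_of_abs_deriv_sub_le {g g' : ℝ → ℝ} {L : ℝ}
    (hg : ∀ t, HasDerivAt g (g' t) t) (hg' : ∀ t, |g' t - g' 0| ≤ L * |t|) (c : ℝ) :
    g c ≤ g 0 + c * g' 0 + L * c ^ 2 / 2 := by
  rcases le_total 0 c with hc | hc
  · refine le_add_mul_add_sq_of_deriv_sub_le hg (fun t ht => ?_) hc
    simpa [abs_of_nonneg ht] using (abs_le.mp (hg' t)).2
  · have hrefl : ∀ t, HasDerivAt (fun t => g (-t)) (-g' (-t)) t := fun t =>
      ((hg (-t)).comp t (hasDerivAt_neg t)).congr_deriv (by ring)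
    have := le_add_mul_add_sq_of_deriv_sub_le (L := L) hrefl (fun t ht => ?_) (neg_nonneg.mpr hc)
    · simpa using this
    · have := (abs_le.mp (hg' (-t))).1
      rw [abs_neg, abs_of_nonneg ht] at this
      rw [neg_zero]
      linarith

theorem EuclideanSpace.apply_add_smul_single_le {ι : Type*} [Fintype ι] [DecidableEq ι]
    {f : EuclideanSpace ℝ ι → ℝ} {f' : EuclideanSpace ℝ ι → EuclideanSpace ℝ ι}
    (hf : ∀ x, HasGradientAt f (f' x) x) {i : ι} {L : ℝ}
    (hL : ∀ x (c : ℝ), |f' (x + c • EuclideanSpace.single i 1) i - f' x i| ≤ L * |c|)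
    (z : EuclideanSpace ℝ ι) (c : ℝ) :
    f (z + c • EuclideanSpace.single i 1) ≤ f z + c * f' z i + L * c ^ 2 / 2 := by
  have hline : ∀ t : ℝ, HasDerivAt (fun s : ℝ => f (z + s • EuclideanSpace.single i 1))
      (f' (z + t • EuclideanSpace.single i 1) i) t := fun t => by
    simpa [EuclideanSpace.inner_single_right] using
      (hf (z + t • EuclideanSpace.single i 1)).hasFDerivAt.hasDerivAt_comp_add_smul
  simpa using le_add_mul_add_sq_of_abs_deriv_sub_le hline (fun t => by simpa using hL z t) c

theorem coordinate_smooth_dual_strong_convexity_general {d : ℕ}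
    (f : EuclideanSpace ℝ (Fin d) → ℝ) (f' : EuclideanSpace ℝ (Fin d) → EuclideanSpace ℝ (Fin d))
    (hdiff : ∀ x, HasGradientAt f (f' x) x)
    (hconv : ConvexOn ℝ Set.univ f)
    (i : Fin d) (Li : ℝ)
    (hcoord : ∀ x (c : ℝ), |f' (x + c • EuclideanSpace.single i 1) i - f' x i| ≤ Li * |c|) :
    ∀ x y, f x + ⟪f' x, y - x⟫ + 1 / (2 * Li) * |f' y i - f' x i| ^ 2 ≤ f y := by
  intro x y
  set e : EuclideanSpace ℝ (Fin d) := EuclideanSpace.single i 1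
  set c := (f' y i - f' x i) / Li
  have hconvex : f x + ⟪f' x, y + (-c) • e - x⟫ ≤ f (y + (-c) • e) := by
    simpa using hconv.add_fderiv_sub_le (Set.mem_univ x) (Set.mem_univ (y + (-c) • e))
      (hdiff x).hasFDerivAt
  have hdescent := EuclideanSpace.apply_add_smul_single_le hdiff hcoord y (-c)
  have hinner : ⟪f' x, y + (-c) • e - x⟫ = ⟪f' x, y - x⟫ - c * f' x i := by
    rw [add_sub_right_comm, inner_add_right, real_inner_smul_right,
      EuclideanSpace.inner_single_right]
    simp only [conj_trivial, one_mul]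
    ring
  have hquad : 1 / (2 * Li) * |f' y i - f' x i| ^ 2 = c * (f' y i - f' x i) - Li * c ^ 2 / 2 := by
    rcases eq_or_ne Li 0 with rfl | hLi
    · simp [c]
    · simp only [c, sq_abs]
      field_simp
      ring
  linarith

/-- Coordinate strong convexity of the dual (Lemma 10): if convex differentiable `f : ℝᵈ → ℝ`
is `Lᵢ`-smooth in coordinate `i`, then
`f(y) ≥ f(x) + ⟨∇f(x), y - x⟩ + (1/(2Lᵢ))|∇ᵢf(y) - ∇ᵢf(x)|²`. -/
theorem coordinate_smooth_dual_strong_convexity {d : ℕ}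
    (f : EuclideanSpace ℝ (Fin d) → ℝ) (f' : EuclideanSpace ℝ (Fin d) → EuclideanSpace ℝ (Fin d))
    (hdiff : ∀ x, HasGradientAt f (f' x) x)
    (hconv : ConvexOn ℝ Set.univ f)
    (i : Fin d) (Li : ℝ) (hLi : 0 < Li)
    (hcoord : ∀ x (c : ℝ), |f' (x + c • EuclideanSpace.single i 1) i - f' x i| ≤ Li * |c|) :
    ∀ x y, f x + ⟪f' x, y - x⟫ + 1 / (2 * Li) * |f' y i - f' x i| ^ 2 ≤ f y :=
  coordinate_smooth_dual_strong_convexity_general f f' hdiff hconv i Li hcoord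
end

section
/- Relative Lipschitzness of the Fenchel game: let f : ℝᵈ → ℝ be L-smooth and μ-strongly convex in the Euclidean norm, with Fenchel conjugate f*. Define g(x,y) := (y, ∇f*(y) - x) and r(x,y) := (μ/2)‖x‖² + f*(y). Then for all z = (zˣ,zʸ), w = (wˣ,wʸ), u = (uˣ,uʸ): ⟨g(w) - g(z), w - u⟩ ≤ (1 + √(L/μ))(V^r_z(w) + V^r_w(u)). -/
/-!
Split `g(w) - g(z)` into the bilinear coupling `(wʸ - zʸ, zˣ - wˣ)` and the gradient part
`∇f*(wʸ) - ∇f*(zʸ)`. The three-point identity bounds the gradient part paired with `wʸ - uʸ`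
by `V^{f*}_{zʸ}(wʸ) + V^{f*}_{wʸ}(uʸ)`. Each of the two coupling terms is handled by Young's
inequality with weight `√(Lμ)`, which balances `(μ/2)‖·‖²` in `x` against `(1/2L)‖·‖²` in `y`,
the latter being dominated by a Bregman divergence of `f*` through its `(1/L)`-strong convexity.
-/

open scoped RealInnerProductSpace

section InnerProductSpace

variable {E : Type*} [NormedAddCommGroup E] [InnerProductSpace ℝ E]

theorem real_inner_le_half_mul_sq_add {l : ℝ} (hl : 0 < l) (a b : E) :
    ⟪a, b⟫ ≤ l / 2 * ‖a‖ ^ 2 + 1 / (2 * l) * ‖b‖ ^ 2 := by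
  have hsq : 0 ≤ (l * ‖a‖ - ‖b‖) ^ 2 / (2 * l) := by positivity
  have hexpand : (l * ‖a‖ - ‖b‖) ^ 2 / (2 * l)
      = l / 2 * ‖a‖ ^ 2 + 1 / (2 * l) * ‖b‖ ^ 2 - ‖a‖ * ‖b‖ := by
    field_simp
    ring
  linarith [real_inner_le_norm a b]

theorem real_inner_le_sqrt_div_mul {μ L : ℝ} (hμ : 0 < μ) (hL : 0 < L) (a b : E) :
    ⟪a, b⟫ ≤ √(L / μ) * (μ / 2 * ‖a‖ ^ 2 + 1 / (2 * L) * ‖b‖ ^ 2) := by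
  set s := √(L / μ)
  have hs : 0 < s := Real.sqrt_pos.mpr (div_pos hL hμ)
  have hsq : s ^ 2 * μ = L := by
    rw [Real.sq_sqrt (div_pos hL hμ).le]
    field_simp
  have hweight : 1 / (2 * (s * μ)) = s / (2 * L) := by
    rw [← hsq]
    field_simp
  calc ⟪a, b⟫ ≤ s * μ / 2 * ‖a‖ ^ 2 + 1 / (2 * (s * μ)) * ‖b‖ ^ 2 :=
        real_inner_le_half_mul_sq_add (mul_pos hs hμ) a b
    _ = s * (μ / 2 * ‖a‖ ^ 2 + 1 / (2 * L) * ‖b‖ ^ 2) := by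
        rw [hweight]
        ring

def bregmanDiv (φ : E → ℝ) (φ' : E → E) (a b : E) : ℝ :=
  φ b - φ a - ⟪φ' a, b - a⟫

theorem inner_sub_eq_bregmanDiv_three_point (φ : E → ℝ) (φ' : E → E) (a b c : E) :
    ⟪φ' b - φ' a, b - c⟫ = bregmanDiv φ φ' a b + bregmanDiv φ φ' b c - bregmanDiv φ φ' a c := by
  simp only [bregmanDiv, inner_sub_left, inner_sub_right]
  ring

theorem mul_sq_norm_le_bregmanDiv {φ : E → ℝ} {φ' : E → E} {κ : ℝ}
    (hφ : ∀ a b, φ a + ⟪φ' a, b - a⟫ + κ * ‖b - a‖ ^ 2 ≤ φ b) (a b : E) :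
    κ * ‖b - a‖ ^ 2 ≤ bregmanDiv φ φ' a b := by
  have := hφ a b
  unfold bregmanDiv
  linarith

theorem bregmanDiv_nonneg {φ : E → ℝ} {φ' : E → E} {κ : ℝ} (hκ : 0 ≤ κ)
    (hφ : ∀ a b, φ a + ⟪φ' a, b - a⟫ + κ * ‖b - a‖ ^ 2 ≤ φ b) (a b : E) :
    0 ≤ bregmanDiv φ φ' a b :=
  (mul_nonneg hκ (sq_nonneg _)).trans (mul_sq_norm_le_bregmanDiv hφ a b)

end InnerProductSpace

theorem fenchel_game_rel_lipschitz_general {d : ℕ}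
    (fs : EuclideanSpace ℝ (Fin d) → ℝ)
    (fs' : EuclideanSpace ℝ (Fin d) → EuclideanSpace ℝ (Fin d))
    (μ L : ℝ) (hμ : 0 < μ) (hμL : μ ≤ L)
    (hfssc : ∀ a b, fs a + ⟪fs' a, b - a⟫ + 1 / (2 * L) * ‖b - a‖ ^ 2 ≤ fs b)
    (Vfs : EuclideanSpace ℝ (Fin d) → EuclideanSpace ℝ (Fin d) → ℝ)
    (hVfs : ∀ a b, Vfs a b = fs b - fs a - ⟪fs' a, b - a⟫)
    (Vr : (EuclideanSpace ℝ (Fin d) × EuclideanSpace ℝ (Fin d)) →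
      (EuclideanSpace ℝ (Fin d) × EuclideanSpace ℝ (Fin d)) → ℝ)
    (hVr : ∀ z w, Vr z w = μ / 2 * ‖w.1 - z.1‖ ^ 2 + Vfs z.2 w.2) :
    ∀ z w u : EuclideanSpace ℝ (Fin d) × EuclideanSpace ℝ (Fin d),
      ⟪w.2 - z.2, w.1 - u.1⟫ + ⟪(fs' w.2 - w.1) - (fs' z.2 - z.1), w.2 - u.2⟫ ≤
        (1 + Real.sqrt (L / μ)) * (Vr z w + Vr w u) := by
  have hL : 0 < L := hμ.trans_le hμL
  obtain rfl : Vfs = bregmanDiv fs fs' := funext₂ hVfs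
  rintro ⟨z₁, z₂⟩ ⟨w₁, w₂⟩ ⟨u₁, u₂⟩
  simp only [hVr]
  have hsplit : (fs' w₂ - w₁) - (fs' z₂ - z₁) = (fs' w₂ - fs' z₂) + (z₁ - w₁) := by abel
  rw [hsplit, inner_add_left, inner_sub_eq_bregmanDiv_three_point fs, real_inner_comm,
    norm_sub_rev u₁ w₁, norm_sub_rev w₁ z₁]
  have hcoupling₁ := real_inner_le_sqrt_div_mul hμ hL (w₁ - u₁) (w₂ - z₂)
  have hcoupling₂ := real_inner_le_sqrt_div_mul hμ hL (z₁ - w₁) (w₂ - u₂)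
  have hzw := mul_sq_norm_le_bregmanDiv hfssc z₂ w₂
  have hwu := mul_sq_norm_le_bregmanDiv hfssc w₂ u₂
  rw [norm_sub_rev w₂ u₂] at hcoupling₂
  have hzu := bregmanDiv_nonneg (by positivity) hfssc z₂ u₂
  have hs := Real.sqrt_nonneg (L / μ)
  have hx₁ : 0 ≤ μ / 2 * ‖z₁ - w₁‖ ^ 2 := by positivity
  have hx₂ : 0 ≤ μ / 2 * ‖w₁ - u₁‖ ^ 2 := by positivity
  linarith [mul_le_mul_of_nonneg_left hzw hs, mul_le_mul_of_nonneg_left hwu hs,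
    mul_nonneg hs hx₁, mul_nonneg hs hx₂]

/-- Relative Lipschitzness for the Fenchel game (Lemma 2): for `f : ℝᵈ → ℝ` `L`-smooth and
`μ`-strongly convex with conjugate `fs` (which is `(1/L)`-strongly convex with gradient `fs'`),
the operator `g(x,y) = (y, ∇f*(y) - x)` is `(1 + √(L/μ))`-relatively Lipschitz with respect to
`r(x,y) = (μ/2)‖x‖² + f*(y)`, stated blockwise. -/
theorem fenchel_game_rel_lipschitz {d : ℕ}
    (fs : EuclideanSpace ℝ (Fin d) → ℝ)
    (fs' : EuclideanSpace ℝ (Fin d) → EuclideanSpace ℝ (Fin d))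
    (μ L : ℝ) (hμ : 0 < μ) (hμL : μ ≤ L)
    (hfsdiff : ∀ y, HasGradientAt fs (fs' y) y)
    (hfssc : ∀ a b, fs a + ⟪fs' a, b - a⟫ + 1 / (2 * L) * ‖b - a‖ ^ 2 ≤ fs b)
    (Vfs : EuclideanSpace ℝ (Fin d) → EuclideanSpace ℝ (Fin d) → ℝ)
    (hVfs : ∀ a b, Vfs a b = fs b - fs a - ⟪fs' a, b - a⟫)
    (Vr : (EuclideanSpace ℝ (Fin d) × EuclideanSpace ℝ (Fin d)) →
      (EuclideanSpace ℝ (Fin d) × EuclideanSpace ℝ (Fin d)) → ℝ)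
    (hVr : ∀ z w, Vr z w = μ / 2 * ‖w.1 - z.1‖ ^ 2 + Vfs z.2 w.2) :
    ∀ z w u : EuclideanSpace ℝ (Fin d) × EuclideanSpace ℝ (Fin d),
      ⟪w.2 - z.2, w.1 - u.1⟫ + ⟪(fs' w.2 - w.1) - (fs' z.2 - z.1), w.2 - u.2⟫ ≤
        (1 + Real.sqrt (L / μ)) * (Vr z w + Vr w u) :=
  fenchel_game_rel_lipschitz_general fs fs' μ L hμ hμL hfssc Vfs hVfs Vr hVr
end

section
/- Strongly monotone mirror prox linear convergence: suppose g is λ-relatively Lipschitz and m-strongly monotone with respect to r (⟨g(w)-g(z), w-z⟩ ≥ m(V_w(z)+V_z(w))), and z* solves the variational inequality (⟨g(z*), z* - z⟩ ≤ 0 for all z). Define iterates w_t = Prox_{z_t}((1/λ)g(z_t)) and z_{t+1} = argmin_z {⟨(1/λ)g(w_t), z⟩ + V_{z_t}(z) + (m/λ)V_{w_t}(z)}. Then V_{z_T}(z*) ≤ (1 + m/λ)^{-T} V_{z₀}(z*). -/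
/-!
Adding the optimality inequality of the extrapolation step (tested at `z_{t+1}`) to that of the
update step (tested at `z*`), relative Lipschitzness absorbs the cross term
`⟪g w_t - g z_t, w_t - z_{t+1}⟫`, leaving
`⟪g w_t, w_t - z*⟫ ≤ λ (V_{z_t} z* - V_{z_{t+1}} z*) + m (V_{w_t} z* - V_{z_{t+1}} z*)`.
Strong monotonicity and the variational inequality bound the left side below by `m V_{w_t} z*`,
so `(λ + m) V_{z_{t+1}} z* ≤ λ V_{z_t} z*` at every step.
-/

open scoped RealInnerProductSpace

theorem ConvexOn.apply_sub_le_sub_of_hasFDerivAt {E : Type*} [NormedAddCommGroup E]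
    [NormedSpace ℝ E] {s : Set E} {r : E → ℝ} {r' : E →L[ℝ] ℝ} {x y : E} (hr : ConvexOn ℝ s r)
    (hx : x ∈ s) (hy : y ∈ s) (hd : HasFDerivAt r r' x) :
    r' (y - x) ≤ r y - r x := by
  let ℓ : ℝ →ᵃ[ℝ] E := AffineMap.lineMap x y
  have hℓ : HasDerivAt ℓ (y - x) 0 := by
    simpa [ℓ] using AffineMap.hasDerivAt_lineMap (a := x) (b := y) (x := (0 : ℝ))
  have hd' : HasDerivAt (r ∘ ℓ) (r' (y - x)) 0 := by
    have hd0 : HasFDerivAt r r' (ℓ 0) := by simpa [ℓ] using hd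
    exact hd0.comp_hasDerivAt 0 hℓ
  have := (hr.comp_affineMap ℓ).le_slope_of_hasDerivAt (x := 0) (y := 1)
    (by simpa [ℓ] using hx) (by simpa [ℓ] using hy) one_pos hd'
  simpa [slope_def_field, ℓ] using this

theorem ConvexOn.inner_sub_le_sub_of_hasGradientAt {E : Type*} [NormedAddCommGroup E]
    [InnerProductSpace ℝ E] [CompleteSpace E] {s : Set E} {r : E → ℝ} {r' x y : E}
    (hr : ConvexOn ℝ s r) (hx : x ∈ s) (hy : y ∈ s) (hd : HasGradientAt r r' x) :
    ⟪r', y - x⟫ ≤ r y - r x := by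
  simpa using hr.apply_sub_le_sub_of_hasFDerivAt hx hy hd.hasFDerivAt

section MirrorProx

variable {E : Type*} [NormedAddCommGroup E] [InnerProductSpace ℝ E]
  {V : E → E → ℝ} {g : E → E} {lam m : ℝ} {z w z' u zs : E}

theorem mirror_prox_inner_le (hlam : 0 < lam)
    (hrel : ⟪g w - g z, w - z'⟫ ≤ lam * (V z w + V w z'))
    (hw : ⟪(1 / lam) • g z, w - z'⟫ ≤ V z z' - V w z' - V z w)
    (hz : ⟪(1 / lam) • g w, z' - u⟫ ≤
      V z u - V z' u - V z z' + (m / lam) * (V w u - V z' u)) :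
    ⟪g w, w - u⟫ ≤ lam * (V z u - V z' u) + m * (V w u - V z' u) := by
  rw [real_inner_smul_left, one_div, inv_mul_le_iff₀ hlam] at hw hz
  have hsplit : ⟪g w, w - u⟫ = ⟪g w, z' - u⟫ + ⟪g z, w - z'⟫ + ⟪g w - g z, w - z'⟫ := by
    simp only [inner_sub_left, inner_sub_right]
    ring
  have hscale : lam * (m / lam) = m := mul_div_cancel₀ m hlam.ne'
  linear_combination hsplit + hz + hw + hrel + (V w u - V z' u) * hscale

theorem mul_bregman_le_inner_of_stronglyMonotone (hm : 0 ≤ m)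
    (hmono : m * (V w zs + V zs w) ≤ ⟪g w - g zs, w - zs⟫) (hvi : ⟪g zs, zs - w⟫ ≤ 0)
    (hV : 0 ≤ V zs w) :
    m * V w zs ≤ ⟪g w, w - zs⟫ := by
  have hsplit : ⟪g w, w - zs⟫ = ⟪g w - g zs, w - zs⟫ - ⟪g zs, zs - w⟫ := by
    simp only [inner_sub_left, inner_sub_right]
    ring
  nlinarith [mul_nonneg hm hV]

theorem mirror_prox_bregman_contraction (hlam : 0 < lam) (hm : 0 ≤ m)
    (hrel : ⟪g w - g z, w - z'⟫ ≤ lam * (V z w + V w z'))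
    (hmono : m * (V w zs + V zs w) ≤ ⟪g w - g zs, w - zs⟫) (hvi : ⟪g zs, zs - w⟫ ≤ 0)
    (hV : 0 ≤ V zs w)
    (hw : ⟪(1 / lam) • g z, w - z'⟫ ≤ V z z' - V w z' - V z w)
    (hz : ⟪(1 / lam) • g w, z' - zs⟫ ≤
      V z zs - V z' zs - V z z' + (m / lam) * (V w zs - V z' zs)) :
    V z' zs ≤ (1 + m / lam)⁻¹ * V z zs := by
  have hupper := mirror_prox_inner_le hlam hrel hw hz
  have hlower := mul_bregman_le_inner_of_stronglyMonotone hm hmono hvi hV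
  have hrate : (1 + m / lam)⁻¹ = lam / (lam + m) := by
    field_simp
  rw [hrate, div_mul_eq_mul_div, le_div_iff₀ (by linarith)]
  linarith

end MirrorProx

/-- Strongly monotone mirror prox (Proposition 4): if `g` is `λ`-relatively Lipschitz and
`m`-strongly monotone with respect to `r`, `z*` solves the VI in `g`, and the iterates satisfy
the first-order optimality inequalities of the strongly monotone mirror prox steps, then
`V_{z_T}(z*) ≤ (1 + m/λ)^{-T} V_{z₀}(z*)`. -/
theorem strongly_monotone_mirror_prox {E : Type*} [NormedAddCommGroup E]
    [InnerProductSpace ℝ E] [CompleteSpace E]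
    (r : E → ℝ) (r' : E → E)
    (hdiff : ∀ x, HasGradientAt r (r' x) x)
    (hconv : ConvexOn ℝ Set.univ r)
    (V : E → E → ℝ)
    (hV : ∀ x y, V x y = r y - r x - ⟪r' x, y - x⟫)
    (g : E → E) (lam m : ℝ) (hlam : 0 < lam) (hm : 0 < m)
    (hrel : ∀ z w u, ⟪g w - g z, w - u⟫ ≤ lam * (V z w + V w u))
    (hmono : ∀ w z, m * (V w z + V z w) ≤ ⟪g w - g z, w - z⟫)
    (zs : E) (hvi : ∀ z, ⟪g zs, zs - z⟫ ≤ 0)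
    (z w : ℕ → E)
    (hw : ∀ t u, ⟪(1 / lam) • g (z t), w t - u⟫ ≤ V (z t) u - V (w t) u - V (z t) (w t))
    (hz : ∀ t u, ⟪(1 / lam) • g (w t), z (t + 1) - u⟫ ≤
      V (z t) u - V (z (t + 1)) u - V (z t) (z (t + 1)) +
        (m / lam) * (V (w t) u - V (z (t + 1)) u))
    (T : ℕ) :
    V (z T) zs ≤ (1 + m / lam)⁻¹ ^ T * V (z 0) zs := by
  have hV_nonneg : ∀ x y, 0 ≤ V x y := fun x y => by
    have := hconv.inner_sub_le_sub_of_hasGradientAt (Set.mem_univ x) (Set.mem_univ y) (hdiff x)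
    rw [hV]
    linarith
  refine le_geom (u := fun t => V (z t) zs) (c := (1 + m / lam)⁻¹) (by positivity) T
    fun t _ => ?_
  exact mirror_prox_bregman_contraction hlam hm.le (hrel _ _ _) (hmono _ _) (hvi _)
    (hV_nonneg _ _) (hw t _) (hz t zs)
end

section
/- Unaccelerated smooth minimization via mirror prox: let f : ℝᵈ → ℝ be L-smooth convex with minimizer x*, g := ∇f, r(x) := (1/2)‖x₀ - x‖₂². Running mirror prox with step parameter L for T iterations from x₀ produces iterates {w_t} with f((1/T)Σ_{t<T} w_t) - f(x*) ≤ L‖x₀ - x*‖₂²/(2T). -/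
open scoped RealInnerProductSpace

open Finset

/-!
With the Euclidean regularizer, mirror prox is the extragradient method. Since `∇f` is
`L`-Lipschitz, the three-point identity together with Young's inequality on the error term
`⟪∇f(w_t) - ∇f(z_t), w_t - z_{t+1}⟫` gives
`⟪∇f(w_t), w_t - u⟫ ≤ (L/2)(‖z_t - u‖² - ‖z_{t+1} - u‖²)`, so the regret telescopes to
`(L/2)‖x₀ - u‖²`. Convexity turns regret into suboptimality,
`f(w_t) - f(u) ≤ ⟪∇f(w_t), w_t - u⟫`, and Jensen's inequality passes to the average iterate.
-/

theorem ConvexOn.add_fderiv_le {E : Type*} [NormedAddCommGroup E] [NormedSpace ℝ E]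
    {s : Set E} {f : E → ℝ} {f' : E →L[ℝ] ℝ} {x y : E} (hf : ConvexOn ℝ s f)
    (hx : x ∈ s) (hy : y ∈ s) (hfx : HasFDerivAt f f' x) :
    f x + f' (y - x) ≤ f y := by
  let line : ℝ →ᵃ[ℝ] E := AffineMap.lineMap x y
  have hderiv : HasDerivAt (f ∘ line) (f' (y - x)) 0 :=
    (by simpa [line] using hfx : HasFDerivAt f f' (line 0)).comp_hasDerivAt 0
      AffineMap.hasDerivAt_lineMap
  have hslope := (hf.comp_affineMap line).le_slope_of_hasDerivAt (by simpa [line] using hx)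
    (by simpa [line] using hy) zero_lt_one hderiv
  simp only [slope_def_field, Function.comp_apply, line, AffineMap.lineMap_apply_zero,
    AffineMap.lineMap_apply_one, sub_zero, div_one] at hslope
  linarith

section InnerProductSpace

variable {F : Type*} [NormedAddCommGroup F] [InnerProductSpace ℝ F]

theorem inner_mirrorProx_step_le {L : ℝ} (hL : 0 < L) {z w z' u gz gw : F}
    (hw : w = z - (1 / L) • gz) (hz' : z' = z - (1 / L) • gw)
    (hlip : ‖gw - gz‖ ≤ L * ‖w - z‖) :
    ⟪gw, w - u⟫ ≤ L / 2 * (‖z - u‖ ^ 2 - ‖z' - u‖ ^ 2) := by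
  have hgz : gz = L • (z - w) := by
    rw [hw, sub_sub_cancel, smul_smul, mul_one_div_cancel hL.ne', one_smul]
  have hgw : gw = L • (z - z') := by
    rw [hz', sub_sub_cancel, smul_smul, mul_one_div_cancel hL.ne', one_smul]
  have hid : ⟪gw, w - u⟫ = L / 2 * (‖z - u‖ ^ 2 - ‖z' - u‖ ^ 2 - ‖w - z‖ ^ 2 - ‖w - z'‖ ^ 2)
      + ⟪gw - gz, w - z'⟫ := by
    simp only [hgz, hgw, ← real_inner_self_eq_norm_sq, inner_sub_left, inner_sub_right,
      real_inner_smul_left, real_inner_comm z w, real_inner_comm z u,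
      real_inner_comm w z', real_inner_comm z' u]
    ring
  have herr : ⟪gw - gz, w - z'⟫ ≤ L / 2 * (‖w - z‖ ^ 2 + ‖w - z'‖ ^ 2) :=
    calc ⟪gw - gz, w - z'⟫ ≤ ‖gw - gz‖ * ‖w - z'‖ := real_inner_le_norm _ _
      _ ≤ L * ‖w - z‖ * ‖w - z'‖ := by gcongr
      _ ≤ L / 2 * (‖w - z‖ ^ 2 + ‖w - z'‖ ^ 2) := by
        nlinarith [sq_nonneg (‖w - z‖ - ‖w - z'‖)]
  linarith

theorem sum_inner_mirrorProx_le {g : F → F} {L : ℝ} (hL : 0 < L)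
    (hg : ∀ x y, ‖g x - g y‖ ≤ L * ‖x - y‖) {z w : ℕ → F}
    (hw : ∀ t, w t = z t - (1 / L) • g (z t)) (hz : ∀ t, z (t + 1) = z t - (1 / L) • g (w t))
    (u : F) (T : ℕ) :
    ∑ t ∈ range T, ⟪g (w t), w t - u⟫ ≤ L / 2 * ‖z 0 - u‖ ^ 2 :=
  calc ∑ t ∈ range T, ⟪g (w t), w t - u⟫
      ≤ ∑ t ∈ range T, L / 2 * (‖z t - u‖ ^ 2 - ‖z (t + 1) - u‖ ^ 2) :=
        sum_le_sum fun t _ => inner_mirrorProx_step_le hL (hw t) (hz t) (hg _ _)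
    _ = L / 2 * (‖z 0 - u‖ ^ 2 - ‖z T - u‖ ^ 2) := by
        rw [← mul_sum, sum_range_sub' (fun t => ‖z t - u‖ ^ 2)]
    _ ≤ L / 2 * ‖z 0 - u‖ ^ 2 := by
        gcongr
        exact sub_le_self _ (sq_nonneg _)

theorem ConvexOn.map_average_sub_le_inner_gradient [CompleteSpace F] {f : F → ℝ} {g : F → F}
    (hf : ConvexOn ℝ Set.univ f) (hg : ∀ x, HasGradientAt f (g x) x)
    {ι : Type*} {s : Finset ι} (hs : s.Nonempty) (p : ι → F) (u : F) :
    f ((#s : ℝ)⁻¹ • ∑ i ∈ s, p i) - f u ≤ (#s : ℝ)⁻¹ * ∑ i ∈ s, ⟪g (p i), p i - u⟫ := by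
  have hcard : (0 : ℝ) < #s := by exact_mod_cast hs.card_pos
  have hjensen : f ((#s : ℝ)⁻¹ • ∑ i ∈ s, p i) ≤ (#s : ℝ)⁻¹ * ∑ i ∈ s, f (p i) := by
    have := hf.map_sum_le (t := s) (w := fun _ => (#s : ℝ)⁻¹) (p := p)
      (fun _ _ => by positivity) (by simp [hcard.ne']) (fun _ _ => Set.mem_univ _)
    simpa [← smul_sum, ← mul_sum] using this
  have hgrad : ∀ i, f (p i) - f u ≤ ⟪g (p i), p i - u⟫ := fun i => by
    have := hf.add_fderiv_le (Set.mem_univ _) (Set.mem_univ u) (hg (p i)).hasFDerivAt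
    rw [InnerProductSpace.toDual_apply_apply, ← neg_sub, inner_neg_right] at this
    linarith
  calc f ((#s : ℝ)⁻¹ • ∑ i ∈ s, p i) - f u
      ≤ (#s : ℝ)⁻¹ * ∑ i ∈ s, (f (p i) - f u) := by
        rw [sum_sub_distrib, sum_const, nsmul_eq_mul, mul_sub, inv_mul_cancel_left₀ hcard.ne']
        linarith
    _ ≤ (#s : ℝ)⁻¹ * ∑ i ∈ s, ⟪g (p i), p i - u⟫ := by
        gcongr with i
        exact hgrad i

end InnerProductSpace

theorem mirror_prox_smooth_minimization_general {d : ℕ}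
    (f : EuclideanSpace ℝ (Fin d) → ℝ)
    (f' : EuclideanSpace ℝ (Fin d) → EuclideanSpace ℝ (Fin d))
    (L : ℝ) (hL : 0 < L)
    (hdiff : ∀ x, HasGradientAt f (f' x) x)
    (hconv : ConvexOn ℝ Set.univ f)
    (hsmooth : ∀ x y, ‖f' x - f' y‖ ≤ L * ‖x - y‖)
    (xs : EuclideanSpace ℝ (Fin d))
    (x₀ : EuclideanSpace ℝ (Fin d))
    (z w : ℕ → EuclideanSpace ℝ (Fin d))
    (hz0 : z 0 = x₀)
    (hw : ∀ t, w t = z t - (1 / L) • f' (z t))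
    (hz : ∀ t, z (t + 1) = z t - (1 / L) • f' (w t))
    (T : ℕ) (hT : 0 < T) :
    f ((T : ℝ)⁻¹ • ∑ t ∈ Finset.range T, w t) - f xs ≤ L * ‖x₀ - xs‖ ^ 2 / (2 * T) := by
  have hTpos : (0 : ℝ) < T := by exact_mod_cast hT
  have hregret := sum_inner_mirrorProx_le hL hsmooth hw hz xs T
  calc f ((T : ℝ)⁻¹ • ∑ t ∈ range T, w t) - f xs
      ≤ (T : ℝ)⁻¹ * ∑ t ∈ range T, ⟪f' (w t), w t - xs⟫ := by
        simpa using hconv.map_average_sub_le_inner_gradient hdiff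
          (nonempty_range_iff.mpr hT.ne') w xs
    _ ≤ (T : ℝ)⁻¹ * (L / 2 * ‖x₀ - xs‖ ^ 2) := by
        rw [← hz0]
        gcongr
    _ = L * ‖x₀ - xs‖ ^ 2 / (2 * T) := by
        field_simp

/-- Unaccelerated smooth minimization via mirror prox (Lemma 12): for `L`-smooth convex
`f : ℝᵈ → ℝ` with minimizer `x*`, the mirror prox iterates
`w_t = z_t - (1/L)∇f(z_t)`, `z_{t+1} = z_t - (1/L)∇f(w_t)` from `z₀ = x₀` satisfy
`f((1/T)∑_{t<T} w_t) - f(x*) ≤ L‖x₀ - x*‖²/(2T)`. -/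
theorem mirror_prox_smooth_minimization {d : ℕ}
    (f : EuclideanSpace ℝ (Fin d) → ℝ)
    (f' : EuclideanSpace ℝ (Fin d) → EuclideanSpace ℝ (Fin d))
    (L : ℝ) (hL : 0 < L)
    (hdiff : ∀ x, HasGradientAt f (f' x) x)
    (hconv : ConvexOn ℝ Set.univ f)
    (hsmooth : ∀ x y, ‖f' x - f' y‖ ≤ L * ‖x - y‖)
    (xs : EuclideanSpace ℝ (Fin d)) (hmin : ∀ x, f xs ≤ f x)
    (x₀ : EuclideanSpace ℝ (Fin d))
    (z w : ℕ → EuclideanSpace ℝ (Fin d))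
    (hz0 : z 0 = x₀)
    (hw : ∀ t, w t = z t - (1 / L) • f' (z t))
    (hz : ∀ t, z (t + 1) = z t - (1 / L) • f' (w t))
    (T : ℕ) (hT : 0 < T) :
    f ((T : ℝ)⁻¹ • ∑ t ∈ Finset.range T, w t) - f xs ≤ L * ‖x₀ - xs‖ ^ 2 / (2 * T) :=
  mirror_prox_smooth_minimization_general f f' L hL hdiff hconv hsmooth xs x₀ z w hz0 hw hz T hT
end

section
/- Relative Lipschitzness of the minimax gradient operator: in the setting above, additionally assume operator norm bounds ‖∇²_{xx}f‖ ≤ L_{xx}, ‖∇²_{xy}f‖ ≤ L_{xy}, ‖∇²_{yy}f‖ ≤ L_{yy} everywhere. Then g is λ-relatively Lipschitz with respect to r(x,y) = (μ_x/2)‖x‖₂² + (μ_y/2)‖y‖₂², with λ = L_{xx}/μ_x + L_{xy}/√(μ_x μ_y) + L_{yy}/μ_y: for all z, w, u, ⟨g(w) - g(z), w - u⟩ ≤ λ(V^r_z(w) + V^r_w(u)). -/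
open scoped RealInnerProductSpace


private lemma minimax_scalar (μx μy Lxx Lxy Lyy a b c e : ℝ)
    (hμx : 0 < μx) (hμy : 0 < μy)
    (hLxx : 0 ≤ Lxx) (hLxy : 0 ≤ Lxy) (hLyy : 0 ≤ Lyy)
    (ha0 : 0 ≤ a) (hb0 : 0 ≤ b) (hc0 : 0 ≤ c) (he0 : 0 ≤ e) :
    Lxx * (a * c) + Lxy * (b * c + a * e) + Lyy * (b * e) ≤
      (Lxx / μx + Lxy / Real.sqrt (μx * μy) + Lyy / μy) *
        (μx / 2 * (a ^ 2 + c ^ 2) + μy / 2 * (b ^ 2 + e ^ 2)) := by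
  set p := Real.sqrt μx with hp
  set q := Real.sqrt μy with hq
  have hp2 : p ^ 2 = μx := Real.sq_sqrt hμx.le
  have hq2 : q ^ 2 = μy := Real.sq_sqrt hμy.le
  have hp0 : 0 < p := Real.sqrt_pos.mpr hμx
  have hq0 : 0 < q := Real.sqrt_pos.mpr hμy
  have hs : Real.sqrt (μx * μy) = p * q := Real.sqrt_mul hμx.le μy
  have hV0 : 0 ≤ μx / 2 * (a ^ 2 + c ^ 2) + μy / 2 * (b ^ 2 + e ^ 2) := by positivity
  have key1 : Lxx * (a * c) ≤ Lxx / μx * (μx / 2 * (a ^ 2 + c ^ 2) + μy / 2 * (b ^ 2 + e ^ 2)) := by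
    rw [div_mul_eq_mul_div, le_div_iff₀ hμx]
    nlinarith [mul_nonneg (mul_nonneg hLxx hμx.le) (sq_nonneg (a - c)),
      mul_nonneg (mul_nonneg hLxx hμy.le) (sq_nonneg b),
      mul_nonneg (mul_nonneg hLxx hμy.le) (sq_nonneg e)]
  have key3 : Lyy * (b * e) ≤ Lyy / μy * (μx / 2 * (a ^ 2 + c ^ 2) + μy / 2 * (b ^ 2 + e ^ 2)) := by
    rw [div_mul_eq_mul_div, le_div_iff₀ hμy]
    nlinarith [mul_nonneg (mul_nonneg hLyy hμy.le) (sq_nonneg (b - e)),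
      mul_nonneg (mul_nonneg hLyy hμx.le) (sq_nonneg a),
      mul_nonneg (mul_nonneg hLyy hμx.le) (sq_nonneg c)]
  have key2 : Lxy * (b * c + a * e) ≤
      Lxy / Real.sqrt (μx * μy) * (μx / 2 * (a ^ 2 + c ^ 2) + μy / 2 * (b ^ 2 + e ^ 2)) := by
    rw [hs, div_mul_eq_mul_div, le_div_iff₀ (mul_pos hp0 hq0), ← hp2, ← hq2]
    nlinarith [mul_nonneg hLxy (sq_nonneg (q * b - p * c)),
      mul_nonneg hLxy (sq_nonneg (p * a - q * e))]
  have expand : (Lxx / μx + Lxy / Real.sqrt (μx * μy) + Lyy / μy) *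
      (μx / 2 * (a ^ 2 + c ^ 2) + μy / 2 * (b ^ 2 + e ^ 2)) =
      Lxx / μx * (μx / 2 * (a ^ 2 + c ^ 2) + μy / 2 * (b ^ 2 + e ^ 2)) +
      Lxy / Real.sqrt (μx * μy) * (μx / 2 * (a ^ 2 + c ^ 2) + μy / 2 * (b ^ 2 + e ^ 2)) +
      Lyy / μy * (μx / 2 * (a ^ 2 + c ^ 2) + μy / 2 * (b ^ 2 + e ^ 2)) := by ring
  linarith [key1, key2, key3]

/-- Relative Lipschitzness of the minimax gradient operator (Lemma 6): with blockwise Hessian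
operator norm bounds `Lxx, Lxy, Lyy` (expressed via the equivalent blockwise Lipschitz bounds
on the partial gradients), the operator `g(x,y) = (∇ₓf, -∇_y f)` is
`(Lxx/μx + Lxy/√(μx μy) + Lyy/μy)`-relatively Lipschitz with respect to
`r(x,y) = (μx/2)‖x‖² + (μy/2)‖y‖²`. -/
theorem minimax_rel_lipschitz {d : ℕ}
    (f : EuclideanSpace ℝ (Fin d) × EuclideanSpace ℝ (Fin d) → ℝ)
    (hf : ContDiff ℝ 2 f)
    (μx μy Lxx Lxy Lyy : ℝ) (hμx : 0 < μx) (hμy : 0 < μy)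
    (hLxx : 0 ≤ Lxx) (hLxy : 0 ≤ Lxy) (hLyy : 0 ≤ Lyy)
    (gx gy : EuclideanSpace ℝ (Fin d) × EuclideanSpace ℝ (Fin d) → EuclideanSpace ℝ (Fin d))
    (hgx : ∀ z, HasGradientAt (fun x => f (x, z.2)) (gx z) z.1)
    (hgy : ∀ z, HasGradientAt (fun y => f (z.1, y)) (gy z) z.2)
    (hxx : ∀ x₁ x₂ y, ‖gx (x₁, y) - gx (x₂, y)‖ ≤ Lxx * ‖x₁ - x₂‖)
    (hxy : ∀ x y₁ y₂, ‖gx (x, y₁) - gx (x, y₂)‖ ≤ Lxy * ‖y₁ - y₂‖)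
    (hyx : ∀ x₁ x₂ y, ‖gy (x₁, y) - gy (x₂, y)‖ ≤ Lxy * ‖x₁ - x₂‖)
    (hyy : ∀ x y₁ y₂, ‖gy (x, y₁) - gy (x, y₂)‖ ≤ Lyy * ‖y₁ - y₂‖)
    (Vr : (EuclideanSpace ℝ (Fin d) × EuclideanSpace ℝ (Fin d)) →
      (EuclideanSpace ℝ (Fin d) × EuclideanSpace ℝ (Fin d)) → ℝ)
    (hVr : ∀ z w, Vr z w = μx / 2 * ‖w.1 - z.1‖ ^ 2 + μy / 2 * ‖w.2 - z.2‖ ^ 2) :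
    ∀ z w u : EuclideanSpace ℝ (Fin d) × EuclideanSpace ℝ (Fin d),
      ⟪gx w - gx z, w.1 - u.1⟫ + ⟪-(gy w) - -(gy z), w.2 - u.2⟫ ≤
        (Lxx / μx + Lxy / Real.sqrt (μx * μy) + Lyy / μy) * (Vr z w + Vr w u) := by
  intro z w u
  set a := ‖w.1 - z.1‖ with ha
  set b := ‖w.2 - z.2‖ with hb
  set c := ‖u.1 - w.1‖ with hc
  set e := ‖u.2 - w.2‖ with he
  have ha0 : 0 ≤ a := norm_nonneg _
  have hb0 : 0 ≤ b := norm_nonneg _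
  have hc0 : 0 ≤ c := norm_nonneg _
  have he0 : 0 ≤ e := norm_nonneg _
  have h1 : ‖gx w - gx z‖ ≤ Lxx * a + Lxy * b := by
    have : gx w - gx z = (gx (w.1, w.2) - gx (z.1, w.2)) + (gx (z.1, w.2) - gx (z.1, z.2)) := by
      simp
    rw [this]
    calc ‖(gx (w.1, w.2) - gx (z.1, w.2)) + (gx (z.1, w.2) - gx (z.1, z.2))‖
        ≤ ‖gx (w.1, w.2) - gx (z.1, w.2)‖ + ‖gx (z.1, w.2) - gx (z.1, z.2)‖ := norm_add_le _ _
      _ ≤ Lxx * a + Lxy * b := add_le_add (hxx _ _ _) (hxy _ _ _)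
  have h2 : ‖gy w - gy z‖ ≤ Lxy * a + Lyy * b := by
    have : gy w - gy z = (gy (w.1, w.2) - gy (z.1, w.2)) + (gy (z.1, w.2) - gy (z.1, z.2)) := by
      simp
    rw [this]
    calc ‖(gy (w.1, w.2) - gy (z.1, w.2)) + (gy (z.1, w.2) - gy (z.1, z.2))‖
        ≤ ‖gy (w.1, w.2) - gy (z.1, w.2)‖ + ‖gy (z.1, w.2) - gy (z.1, z.2)‖ := norm_add_le _ _
      _ ≤ Lxy * a + Lyy * b := add_le_add (hyx _ _ _) (hyy _ _ _)
  have hin1 : ⟪gx w - gx z, w.1 - u.1⟫ ≤ (Lxx * a + Lxy * b) * c := by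
    calc ⟪gx w - gx z, w.1 - u.1⟫ ≤ ‖gx w - gx z‖ * ‖w.1 - u.1‖ := real_inner_le_norm _ _
      _ = ‖gx w - gx z‖ * c := by rw [norm_sub_rev w.1 u.1]
      _ ≤ (Lxx * a + Lxy * b) * c := mul_le_mul_of_nonneg_right h1 hc0
  have hin2 : ⟪-(gy w) - -(gy z), w.2 - u.2⟫ ≤ (Lxy * a + Lyy * b) * e := by
    have hn : ‖-(gy w) - -(gy z)‖ = ‖gy w - gy z‖ := by
      rw [show -(gy w) - -(gy z) = -(gy w - gy z) by abel, norm_neg]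
    calc ⟪-(gy w) - -(gy z), w.2 - u.2⟫ ≤ ‖-(gy w) - -(gy z)‖ * ‖w.2 - u.2‖ :=
          real_inner_le_norm _ _
      _ = ‖gy w - gy z‖ * e := by rw [hn, norm_sub_rev w.2 u.2]
      _ ≤ (Lxy * a + Lyy * b) * e := mul_le_mul_of_nonneg_right h2 he0
  have hV : Vr z w + Vr w u = μx / 2 * (a ^ 2 + c ^ 2) + μy / 2 * (b ^ 2 + e ^ 2) := by
    rw [hVr, hVr]; ring
  calc ⟪gx w - gx z, w.1 - u.1⟫ + ⟪-(gy w) - -(gy z), w.2 - u.2⟫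
      ≤ (Lxx * a + Lxy * b) * c + (Lxy * a + Lyy * b) * e := add_le_add hin1 hin2
    _ = Lxx * (a * c) + Lxy * (b * c + a * e) + Lyy * (b * e) := by ring
    _ ≤ (Lxx / μx + Lxy / Real.sqrt (μx * μy) + Lyy / μy) *
        (μx / 2 * (a ^ 2 + c ^ 2) + μy / 2 * (b ^ 2 + e ^ 2)) :=
      minimax_scalar μx μy Lxx Lxy Lyy a b c e hμx hμy hLxx hLxy hLyy ha0 hb0 hc0 he0
    _ = (Lxx / μx + Lxy / Real.sqrt (μx * μy) + Lyy / μy) * (Vr z w + Vr w u) := by rw [hV]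
end

section
/- Dual extrapolation regret bound: let g be λ-relatively Lipschitz with respect to differentiable convex r. Initialize s₀ = 0 and iterate z_t = Prox_{z̄}(s_t), w_t = Prox_{z_t}((1/λ)g(z_t)), s_{t+1} = s_t + (1/λ)g(w_t), where Prox_x(v) = argmin_y ⟨v,y⟩ + V_x(y). Then for all u, Σ_{t=0}^{T-1} ⟨g(w_t), w_t - u⟩ ≤ λ·V_{z̄}(u). -/
open scoped RealInnerProductSpace

lemma V_nonneg_aux {E : Type*} [NormedAddCommGroup E] [InnerProductSpace ℝ E] [CompleteSpace E]
    (r : E → ℝ) (r' : E → E)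
    (hdiff : ∀ x, HasGradientAt r (r' x) x)
    (hconv : ConvexOn ℝ Set.univ r) (x y : E) :
    r x + ⟪r' x, y - x⟫ ≤ r y := by
  set φ : ℝ → E := fun τ => AffineMap.lineMap x y τ with hφ
  have hline : ConvexOn ℝ Set.univ (r ∘ φ) := by
    have := hconv.comp_affineMap (AffineMap.lineMap x y : ℝ →ᵃ[ℝ] E)
    simpa [hφ, Function.comp] using this.subset (by simp) convex_univ
  have hderiv : HasDerivAt (r ∘ φ) ⟪r' x, y - x⟫ 0 := by
    have hF : HasFDerivAt r ((InnerProductSpace.toDual ℝ E) (r' x)) x :=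
      (hasGradientAt_iff_hasFDerivAt).mp (hdiff x)
    have hφd : HasDerivAt φ (y - x) 0 := by
      have : HasDerivAt (fun τ : ℝ => τ • (y - x) + x) (y - x) 0 := by
        simpa using ((hasDerivAt_id (0:ℝ)).smul_const (y - x)).add_const x
      simpa [hφ, AffineMap.lineMap_apply, funext_iff] using this
    have hF0 : HasFDerivAt r ((InnerProductSpace.toDual ℝ E) (r' x)) (φ 0) := by
      simpa [hφ] using hF
    simpa using hF0.comp_hasDerivAt (0:ℝ) hφd
  have hs := hline.le_slope_of_hasDerivAt (Set.mem_univ 0) (Set.mem_univ 1) one_pos hderiv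
  rw [slope_def_field] at hs
  simp [hφ] at hs
  linarith

/-- Dual extrapolation regret bound (Proposition 5): if `g` is `λ`-relatively Lipschitz with
respect to `r` and the dual extrapolation iterates (`s₀ = 0`, `z_t = Prox_{z̄}(s_t)`,
`w_t = Prox_{z_t}((1/λ)g(z_t))`, `s_{t+1} = s_t + (1/λ)g(w_t)`) satisfy the first-order
proximal optimality inequalities, then `∑_{t<T} ⟨g(w_t), w_t - u⟩ ≤ λ V_{z̄}(u)`. -/
theorem dual_extrapolation_regret {E : Type*} [NormedAddCommGroup E]
    [InnerProductSpace ℝ E] [CompleteSpace E]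
    (r : E → ℝ) (r' : E → E)
    (hdiff : ∀ x, HasGradientAt r (r' x) x)
    (hconv : ConvexOn ℝ Set.univ r)
    (V : E → E → ℝ)
    (hV : ∀ x y, V x y = r y - r x - ⟪r' x, y - x⟫)
    (g : E → E) (lam : ℝ) (hlam : 0 < lam)
    (hrel : ∀ z w u, ⟪g w - g z, w - u⟫ ≤ lam * (V z w + V w u))
    (zbar : E) (s z w : ℕ → E)
    (hs0 : s 0 = 0)
    (hzt : ∀ t u, ⟪s t, z t - u⟫ ≤ V zbar u - V (z t) u - V zbar (z t))
    (hwt : ∀ t u, ⟪(1 / lam) • g (z t), w t - u⟫ ≤ V (z t) u - V (w t) u - V (z t) (w t))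
    (hst : ∀ t, s (t + 1) = s t + (1 / lam) • g (w t))
    (T : ℕ) (u : E) :
    ∑ t ∈ Finset.range T, ⟪g (w t), w t - u⟫ ≤ lam * V zbar u := by
  have hVnn : ∀ x y, 0 ≤ V x y := by
    intro x y
    have := V_nonneg_aux r r' hdiff hconv x y
    rw [hV]; linarith
  set F : ℕ → ℝ := fun t => lam * (V zbar (z t) + ⟪s t, z t - u⟫) with hF
  have hstep : ∀ t, ⟪g (w t), w t - u⟫ ≤ F (t + 1) - F t := by
    intro t
    have h1 := hrel (z t) (w t) (z (t + 1))
    have h2 := hwt t (z (t + 1))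
    rw [real_inner_smul_left] at h2
    have h2' : ⟪g (z t), w t - z (t + 1)⟫ ≤
        lam * (V (z t) (z (t + 1)) - V (w t) (z (t + 1)) - V (z t) (w t)) := by
      have := mul_le_mul_of_nonneg_left h2 hlam.le
      rw [one_div, mul_inv_cancel_left₀ hlam.ne'] at this
      exact this
    have h3 := mul_le_mul_of_nonneg_left (hzt t (z (t + 1))) hlam.le
    have h4 : ⟪g (w t), z (t + 1) - u⟫ =
        lam * ⟪s (t + 1), z (t + 1) - u⟫ - lam * ⟪s t, z (t + 1) - u⟫ := by
      have hg : g (w t) = lam • (s (t + 1) - s t) := by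
        rw [hst t, add_sub_cancel_left, smul_smul, one_div, mul_inv_cancel₀ hlam.ne', one_smul]
      rw [hg, real_inner_smul_left, inner_sub_left]
      ring
    have hdecomp : ⟪g (w t), w t - u⟫ = ⟪g (w t) - g (z t), w t - z (t + 1)⟫ +
        ⟪g (z t), w t - z (t + 1)⟫ + ⟪g (w t), z (t + 1) - u⟫ := by
      simp only [inner_sub_left, inner_sub_right]
      ring
    have hsplit : ⟪s t, z t - z (t + 1)⟫ + ⟪s t, z (t + 1) - u⟫ = ⟪s t, z t - u⟫ := by
      rw [← inner_add_right]
      congr 1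
      abel
    have hsplit' := congrArg (fun x => lam * x) hsplit
    simp only [mul_add] at hsplit'
    simp only [hF]
    nlinarith [h1, h2', h3, h4, hdecomp, hsplit']
  calc ∑ t ∈ Finset.range T, ⟪g (w t), w t - u⟫
      ≤ ∑ t ∈ Finset.range T, (F (t + 1) - F t) :=
        Finset.sum_le_sum fun t _ => hstep t
    _ = F T - F 0 := Finset.sum_range_sub F T
    _ ≤ lam * V zbar u := by
        have hFT : F T ≤ lam * V zbar u := by
          have := hzt T u
          have h0 := hVnn (z T) u
          simp only [hF]
          nlinarith [mul_le_mul_of_nonneg_left (hzt T u) hlam.le,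
            mul_nonneg hlam.le (hVnn (z T) u)]
        have hF0 : 0 ≤ F 0 := by
          simp only [hF, hs0]
          simp
          exact mul_nonneg hlam.le (hVnn zbar (z 0))
        linarith
end

section
/- Potential monotonicity in dual extrapolation: under the dual extrapolation iteration above, the quantity Φ_t := (1/λ)Σ_{k=0}^{t-1} ⟨g(w_k), w_k - z̄⟩ - ⟨s_t, z_t - z̄⟩ - V_{z̄}(z_t) is nonincreasing in t, i.e., Φ_{t+1} ≤ Φ_t for all t, with Φ₀ = 0. -/
/-!
Substituting `s_{t+1} = s_t + g(w_t)/λ`, the increment `Φ_{t+1} - Φ_t` is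
`⟪g(w_t)/λ, w_t - z_{t+1}⟫ + ⟪s_t, z_t - z_{t+1}⟫ - V_{z̄}(z_{t+1}) + V_{z̄}(z_t)`.
The prox inequality for `w_t` combined with relative Lipschitzness bounds the first term by
`V_{z_t}(z_{t+1})`, and the prox inequality for `z_t` tested at `z_{t+1}` bounds the rest by
`-V_{z_t}(z_{t+1})`. For `Φ₀`, testing the prox inequality for `z₀` at `z̄` gives
`V_{z̄}(z₀) + V_{z₀}(z̄) ≤ 0`, and Bregman divergences of a convex function are nonnegative.
-/

open scoped RealInnerProductSpace

section

variable {E : Type*} [NormedAddCommGroup E] [InnerProductSpace ℝ E]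

theorem ConvexOn.inner_gradient_le_sub [CompleteSpace E] {r : E → ℝ} {r' : E} {s : Set E} {x y : E}
    (hconv : ConvexOn ℝ s r) (hx : x ∈ s) (hy : y ∈ s) (hr : HasGradientAt r r' x) :
    ⟪r', y - x⟫ ≤ r y - r x := by
  have hline : HasDerivAt (fun t : ℝ => AffineMap.lineMap x y t) (y - x) 0 := by
    simpa [AffineMap.lineMap_apply_module'] using
      ((hasDerivAt_id (0 : ℝ)).smul_const (y - x)).add_const x
  have hderiv : HasDerivAt (r ∘ AffineMap.lineMap (k := ℝ) x y) ⟪r', y - x⟫ 0 := by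
    have hr0 : HasFDerivAt r (InnerProductSpace.toDual ℝ E r')
        (AffineMap.lineMap x y (0 : ℝ)) := by
      simpa using hr.hasFDerivAt
    simpa using hr0.comp_hasDerivAt (0 : ℝ) hline
  have hseg : ConvexOn ℝ (AffineMap.lineMap x y ⁻¹' s) (r ∘ AffineMap.lineMap x y) :=
    hconv.comp_affineMap _
  simpa [slope] using hseg.le_slope_of_hasDerivAt (by simpa using hx) (by simpa using hy)
    zero_lt_one hderiv

theorem inner_extrapolation_le {V : E → E → ℝ} {lam : ℝ} (hlam : 0 < lam) {z w u a b : E}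
    (hrel : ⟪b - a, w - u⟫ ≤ lam * (V z w + V w u))
    (hprox : ⟪(1 / lam) • a, w - u⟫ ≤ V z u - V w u - V z w) :
    ⟪(1 / lam) • b, w - u⟫ ≤ V z u := by
  have hrel' : (1 / lam) * ⟪b - a, w - u⟫ ≤ V z w + V w u := by
    rw [one_div, inv_mul_le_iff₀ hlam]
    exact hrel
  rw [real_inner_smul_left] at hprox ⊢
  rw [inner_sub_left] at hrel'
  linarith

end

/-- Potential monotonicity in dual extrapolation (Corollary 2): the quantity
`Φ_t = (1/λ)∑_{k<t} ⟨g(w_k), w_k - z̄⟩ - ⟨s_t, z_t - z̄⟩ - V_{z̄}(z_t)` is nonincreasing in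
`t`, and `Φ₀ = 0`. -/
theorem dual_extrapolation_potential {E : Type*} [NormedAddCommGroup E]
    [InnerProductSpace ℝ E] [CompleteSpace E]
    (r : E → ℝ) (r' : E → E)
    (hdiff : ∀ x, HasGradientAt r (r' x) x)
    (hconv : ConvexOn ℝ Set.univ r)
    (V : E → E → ℝ)
    (hV : ∀ x y, V x y = r y - r x - ⟪r' x, y - x⟫)
    (g : E → E) (lam : ℝ) (hlam : 0 < lam)
    (hrel : ∀ z w u, ⟪g w - g z, w - u⟫ ≤ lam * (V z w + V w u))
    (zbar : E) (s z w : ℕ → E)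
    (hs0 : s 0 = 0)
    (hzt : ∀ t u, ⟪s t, z t - u⟫ ≤ V zbar u - V (z t) u - V zbar (z t))
    (hwt : ∀ t u, ⟪(1 / lam) • g (z t), w t - u⟫ ≤ V (z t) u - V (w t) u - V (z t) (w t))
    (hst : ∀ t, s (t + 1) = s t + (1 / lam) • g (w t))
    (Φ : ℕ → ℝ)
    (hΦ : ∀ t, Φ t = (1 / lam) * ∑ k ∈ Finset.range t, ⟪g (w k), w k - zbar⟫ -
      ⟪s t, z t - zbar⟫ - V zbar (z t)) :
    (∀ t, Φ (t + 1) ≤ Φ t) ∧ Φ 0 = 0 := by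
  refine ⟨fun t => ?_, ?_⟩
  · have hincrement : Φ (t + 1) - Φ t = ⟪(1 / lam) • g (w t), w t - z (t + 1)⟫
        + ⟪s t, z t - z (t + 1)⟫ - V zbar (z (t + 1)) + V zbar (z t) := by
      simp only [hΦ, hst, Finset.sum_range_succ, inner_add_left, inner_sub_right,
        real_inner_smul_left]
      ring
    have hextra := inner_extrapolation_le hlam (hrel (z t) (w t) (z (t + 1))) (hwt t (z (t + 1)))
    linarith [hzt t (z (t + 1))]
  · have hV_nonneg : ∀ x y, 0 ≤ V x y := fun x y => by
      rw [hV]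
      linarith [hconv.inner_gradient_le_sub (Set.mem_univ x) (Set.mem_univ y) (hdiff x)]
    have hV_self : V zbar zbar = 0 := by simp [hV]
    have hprox0 := hzt 0 zbar
    rw [hs0, inner_zero_left] at hprox0
    rw [hΦ, hs0, inner_zero_left, Finset.sum_range_zero]
    linarith [hV_nonneg (z 0) zbar, hV_nonneg zbar (z 0)]
end

section
/- Mirror prox iterates for the Fenchel game admit implicit dual representation: with g(x,y) = (y, ∇f*(y) - x), r(x,y) = (μ/2)‖x‖₂² + f*(y), and step parameter λ, if z_t = (x_t, ∇f(v_t)), then the half-step and full-step dual coordinates satisfy y_{t+1/2} = ∇f(v_t + (1/λ)(x_t - v_t)) and y_{t+1} = ∇f(v_t + (1/λ)(x_{t+1/2} - v_{t+1/2})), where y_{t+1/2} = argmin_y ⟨(1/λ)(∇f*(y_t) - x_t), y⟩ + V^{f*}_{y_t}(y). -/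
open scoped RealInnerProductSpace

lemma fenchel_aux_unique {d : ℕ} {fs : EuclideanSpace ℝ (Fin d) → ℝ}
    (hfs : StrictConvexOn ℝ Set.univ fs) (w y1 y2 : EuclideanSpace ℝ (Fin d))
    (h1 : ∀ y, fs y1 - ⟪w, y1⟫ ≤ fs y - ⟪w, y⟫)
    (h2 : ∀ y, fs y2 - ⟪w, y2⟫ ≤ fs y - ⟪w, y⟫) : y1 = y2 := by
  by_contra hne
  have hz := hfs.2 (Set.mem_univ y1) (Set.mem_univ y2) hne
    (by norm_num : (0:ℝ) < 1/2) (by norm_num : (0:ℝ) < 1/2) (by norm_num)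
  set z := (1/2:ℝ) • y1 + (1/2:ℝ) • y2 with hzdef
  have hiz : ⟪w, z⟫ = (1/2:ℝ) * ⟪w, y1⟫ + (1/2:ℝ) * ⟪w, y2⟫ := by
    rw [hzdef, inner_add_right, real_inner_smul_right, real_inner_smul_right]
  rw [smul_eq_mul, smul_eq_mul] at hz
  have e1 := h1 z
  have e2 := h2 z
  have := h1 y2
  have := h2 y1
  linarith [hz, e1, e2]

/-- Implicit dual representation of Fenchel-game mirror prox iterates (Lemma 3): with
`g(x,y) = (y, ∇f*(y) - x)`, `r(x,y) = (μ/2)‖x‖² + f*(y)` and step parameter `λ`, if the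
current dual iterate is `y_t = ∇f(v_t)`, then the half-step dual coordinate
`y_{t+1/2} = argmin_y ⟨(1/λ)(∇f*(y_t) - x_t), y⟩ + V^{f*}_{y_t}(y)` equals
`∇f(v_t + (1/λ)(x_t - v_t))`, and the full-step dual coordinate equals
`∇f(v_t + (1/λ)(x_{t+1/2} - v_{t+1/2}))`. -/
theorem fenchel_game_iterate_form {d : ℕ}
    (f fs : EuclideanSpace ℝ (Fin d) → ℝ)
    (f' fs' : EuclideanSpace ℝ (Fin d) → EuclideanSpace ℝ (Fin d))
    (hfdiff : ∀ x, HasGradientAt f (f' x) x)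
    (hfsdiff : ∀ y, HasGradientAt fs (fs' y) y)
    (hfsconv : StrictConvexOn ℝ Set.univ fs)
    (hinv : ∀ v, fs' (f' v) = v)
    (hargmax : ∀ v y, ⟪v, y⟫ - fs y ≤ ⟪v, f' v⟫ - fs (f' v))
    (Vfs : EuclideanSpace ℝ (Fin d) → EuclideanSpace ℝ (Fin d) → ℝ)
    (hVfs : ∀ a b, Vfs a b = fs b - fs a - ⟪fs' a, b - a⟫)
    (lam : ℝ) (hlam : 0 < lam)
    (xt vt xth vth : EuclideanSpace ℝ (Fin d))
    (hvth : vth = vt + (1 / lam) • (xt - vt))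
    (yth : EuclideanSpace ℝ (Fin d))
    (hyth : ∀ y, ⟪(1 / lam) • (fs' (f' vt) - xt), yth⟫ + Vfs (f' vt) yth ≤
      ⟪(1 / lam) • (fs' (f' vt) - xt), y⟫ + Vfs (f' vt) y)
    (yt1 : EuclideanSpace ℝ (Fin d))
    (hyt1 : ∀ y, ⟪(1 / lam) • (fs' (f' vth) - xth), yt1⟫ + Vfs (f' vt) yt1 ≤
      ⟪(1 / lam) • (fs' (f' vth) - xth), y⟫ + Vfs (f' vt) y) :
    yth = f' (vt + (1 / lam) • (xt - vt)) ∧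
      yt1 = f' (vt + (1 / lam) • (xth - vth)) := by
  constructor
  · apply fenchel_aux_unique hfsconv (vt + (1 / lam) • (xt - vt))
    · intro y
      have h := hyth y
      rw [hVfs, hVfs, hinv] at h
      simp only [inner_add_left, inner_sub_left, inner_sub_right,
        real_inner_smul_left, real_inner_smul_right] at h ⊢
      linarith
    · intro y
      have h := hargmax (vt + (1 / lam) • (xt - vt)) y
      linarith
  · apply fenchel_aux_unique hfsconv (vt + (1 / lam) • (xth - vth))
    · intro y
      have h := hyt1 y
      rw [hVfs, hVfs, hinv, hinv] at h
      simp only [inner_add_left, inner_sub_left, inner_sub_right,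
        real_inner_smul_left, real_inner_smul_right] at h ⊢
      linarith
    · intro y
      have h := hargmax (vt + (1 / lam) • (xth - vth)) y
      linarith
end
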